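/- arXiv:1604.07133 — 7 statements merged into one kernel-verified Lean document; each statement's English description precedes it below -/
import Mathlib

section
/- Let G be a finite non-abelian AC-group (i.e., the centralizer of every non-central element is abelian). If x and y are non-central elements of G with distinct centralizers C_G(x) ≠ C_G(y), then C_G(x) ∩ C_G(y) = Z(G). -/
open Polynomial

/-- The commuting graph of a group: vertices are non-central elements,
adjacent iff distinct and commuting. -/
def commGraph (G : Type*) [Group G] : SimpleGraph {x : G // x ∉ Subgroup.center G} where
  Adj x y := x ≠ y ∧ (x : G) * y = y * x
  symm := ⟨by rintro x y ⟨h1, h2⟩; exact ⟨h1.symm, h2.symm⟩⟩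
  loopless := ⟨by rintro x ⟨h, _⟩; exact h rfl⟩

/-- The characteristic polynomial (over ℝ) of the adjacency matrix of the
commuting graph of a finite group. -/
noncomputable def commCharpoly (G : Type*) [Group G] [Finite G] : Polynomial ℝ := by
  classical
  have : Fintype G := Fintype.ofFinite G
  exact (SimpleGraph.adjMatrix ℝ (commGraph G)).charpoly

/-- The disjoint union of `k` copies of the complete graph on `m` vertices. -/
def completeUnion (k m : ℕ) : SimpleGraph (Fin k × Fin m) where
  Adj x y := x ≠ y ∧ x.1 = y.1
  symm := ⟨by rintro x y ⟨h1, h2⟩; exact ⟨h1.symm, h2.symm⟩⟩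
  loopless := ⟨by rintro x ⟨h, _⟩; exact h rfl⟩

/-
In an AC-group, commuting is an equivalence relation on non-central elements whose classes are
the centralizers: if non-central `g` and `w` commute, then `C(w) ≤ C(g)` because `C(w)` is abelian
and contains `g`, and symmetrically `C(g) ≤ C(w)`. So a non-central `g ∈ C(x) ∩ C(y)` would force
`C(x) = C(g) = C(y)`.
-/

namespace Subgroup

variable {G : Type*} [Group G]

theorem centralizer_singleton_le_of_mem {w g : G}
    (hcomm : ∀ u ∈ centralizer ({w} : Set G), ∀ v ∈ centralizer ({w} : Set G), u * v = v * u)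
    (hg : g ∈ centralizer ({w} : Set G)) :
    centralizer ({w} : Set G) ≤ centralizer ({g} : Set G) := fun u hu =>
  mem_centralizer_singleton_iff.mpr (hcomm u hu g hg)

theorem centralizer_singleton_eq_of_mem
    (hAC : ∀ x : G, x ∉ center G →
      ∀ y ∈ centralizer ({x} : Set G), ∀ z ∈ centralizer ({x} : Set G), y * z = z * y)
    {w g : G} (hw : w ∉ center G) (hg : g ∉ center G) (hgw : g ∈ centralizer ({w} : Set G)) :
    centralizer ({w} : Set G) = centralizer ({g} : Set G) := by
  have hwg : w ∈ centralizer ({g} : Set G) :=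
    mem_centralizer_singleton_iff.mpr (mem_centralizer_singleton_iff.mp hgw).symm
  exact le_antisymm (centralizer_singleton_le_of_mem (hAC w hw) hgw)
    (centralizer_singleton_le_of_mem (hAC g hg) hwg)

end Subgroup

theorem centralizer_inf_centralizer_eq_center_general
    (G : Type*) [Group G]
    (hAC : ∀ x : G, x ∉ Subgroup.center G →
      ∀ y ∈ Subgroup.centralizer ({x} : Set G), ∀ z ∈ Subgroup.centralizer ({x} : Set G),
        y * z = z * y)
    (x y : G) (hx : x ∉ Subgroup.center G) (hy : y ∉ Subgroup.center G)
    (hne : Subgroup.centralizer ({x} : Set G) ≠ Subgroup.centralizer ({y} : Set G)) :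
    Subgroup.centralizer ({x} : Set G) ⊓ Subgroup.centralizer ({y} : Set G)
      = Subgroup.center G := by
  refine le_antisymm (fun g ⟨hgx, hgy⟩ => ?_) (le_inf
    (Subgroup.center_le_centralizer _) (Subgroup.center_le_centralizer _))
  by_contra hg
  exact hne ((Subgroup.centralizer_singleton_eq_of_mem hAC hx hg hgx).trans
    (Subgroup.centralizer_singleton_eq_of_mem hAC hy hg hgy).symm)

/-- Let `G` be a finite non-abelian AC-group. If `x` and `y` are non-central elements
with distinct centralizers, then `C_G(x) ∩ C_G(y) = Z(G)`. -/
theorem centralizer_inf_centralizer_eq_center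
    (G : Type*) [Group G] [Finite G]
    (hna : ¬ ∀ a b : G, a * b = b * a)
    (hAC : ∀ x : G, x ∉ Subgroup.center G →
      ∀ y ∈ Subgroup.centralizer ({x} : Set G), ∀ z ∈ Subgroup.centralizer ({x} : Set G),
        y * z = z * y)
    (x y : G) (hx : x ∉ Subgroup.center G) (hy : y ∉ Subgroup.center G)
    (hne : Subgroup.centralizer ({x} : Set G) ≠ Subgroup.centralizer ({y} : Set G)) :
    Subgroup.centralizer ({x} : Set G) ⊓ Subgroup.centralizer ({y} : Set G)
      = Subgroup.center G :=
  centralizer_inf_centralizer_eq_center_general G hAC x y hx hy hne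
end

section
/- Let G be a finite non-abelian AC-group with distinct centralizers X_1, ..., X_n of non-central elements. Then the commuting graph Γ_G is the disjoint union of complete graphs K_{|X_1|-|Z(G)|}, ..., K_{|X_n|-|Z(G)|}; equivalently, two non-central elements x, y are connected in Γ_G if and only if they lie in the same centralizer X_i. -/
open Polynomial

theorem exists_noncentral_centralizer_mem_iff_commute {G : Type*} [Group G]
    (hAC : ∀ x : G, x ∉ Subgroup.center G →
      ∀ y ∈ Subgroup.centralizer ({x} : Set G), ∀ z ∈ Subgroup.centralizer ({x} : Set G),
        y * z = z * y)
    {x : G} (hx : x ∉ Subgroup.center G) (y : G) :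
    (∃ z : G, z ∉ Subgroup.center G ∧
      x ∈ Subgroup.centralizer ({z} : Set G) ∧ y ∈ Subgroup.centralizer ({z} : Set G)) ↔
      Commute x y := by
  constructor
  · rintro ⟨z, hz, hxz, hyz⟩
    exact hAC z hz x hxz y hyz
  · intro hxy
    exact ⟨x, hx, Subgroup.mem_centralizer_singleton_iff.mpr rfl,
      Subgroup.mem_centralizer_singleton_iff.mpr hxy.symm⟩

theorem commGraph_adj_iff_mem_same_centralizer_general
    (G : Type*) [Group G]
    (hAC : ∀ x : G, x ∉ Subgroup.center G →
      ∀ y ∈ Subgroup.centralizer ({x} : Set G), ∀ z ∈ Subgroup.centralizer ({x} : Set G),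
        y * z = z * y) :
    ∀ (x y : G) (hx : x ∉ Subgroup.center G) (hy : y ∉ Subgroup.center G),
      (commGraph G).Adj ⟨x, hx⟩ ⟨y, hy⟩ ↔
        x ≠ y ∧ ∃ z : G, z ∉ Subgroup.center G ∧
          x ∈ Subgroup.centralizer ({z} : Set G) ∧ y ∈ Subgroup.centralizer ({z} : Set G) := by
  intro x y hx hy
  rw [exists_noncentral_centralizer_mem_iff_commute hAC hx y]
  exact and_congr Subtype.mk_eq_mk.not Iff.rfl

/-- In a finite non-abelian AC-group, two distinct non-central elements are adjacent in the
commuting graph iff they lie in a common centralizer of a non-central element; i.e. the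
commuting graph is the disjoint union of the complete graphs on the sets `X_i \ Z(G)`. -/
theorem commGraph_adj_iff_mem_same_centralizer
    (G : Type*) [Group G] [Finite G]
    (hna : ¬ ∀ a b : G, a * b = b * a)
    (hAC : ∀ x : G, x ∉ Subgroup.center G →
      ∀ y ∈ Subgroup.centralizer ({x} : Set G), ∀ z ∈ Subgroup.centralizer ({x} : Set G),
        y * z = z * y) :
    ∀ (x y : G) (hx : x ∉ Subgroup.center G) (hy : y ∉ Subgroup.center G),
      (commGraph G).Adj ⟨x, hx⟩ ⟨y, hy⟩ ↔
        x ≠ y ∧ ∃ z : G, z ∉ Subgroup.center G ∧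
          x ∈ Subgroup.centralizer ({z} : Set G) ∧ y ∈ Subgroup.centralizer ({z} : Set G) :=
  commGraph_adj_iff_mem_same_centralizer_general G hAC
end

section
/- The commuting graph of any finite non-abelian AC-group is integral, i.e., all eigenvalues of its adjacency matrix are integers. -/
/-! In an AC-group, commuting is transitive on non-central elements: if `x` and `z` both commute
with `y`, they lie in the abelian centralizer of `y`. So the commuting graph is a disjoint union of
cliques, `A + 1` is block diagonal with all-ones blocks, and an eigenvector of `A` for `μ ≠ -1` is
constant on each clique whose size is then `μ + 1`. -/

open Polynomial

open Finset Matrix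

theorem Matrix.exists_mulVec_eq_smul_of_isRoot_charpoly {n K : Type*} [Fintype n] [DecidableEq n]
    [Field K] {A : Matrix n n K} {μ : K} (hμ : A.charpoly.IsRoot μ) :
    ∃ v ≠ 0, A *ᵥ v = μ • v := by
  have hspec : μ ∈ spectrum K A.toLin' := by
    rwa [Matrix.spectrum_toLin', Matrix.mem_spectrum_iff_isRoot_charpoly]
  obtain ⟨v, hv⟩ := (Module.End.hasEigenvalue_iff_mem_spectrum.mpr hspec).exists_hasEigenvector
  exact ⟨v, hv.2, Module.End.mem_eigenspace_iff.mp hv.1⟩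

namespace SimpleGraph

variable {V : Type*} [Fintype V] [DecidableEq V] {G : SimpleGraph V} [DecidableRel G.Adj]
  {r : V → V → Prop} [DecidableRel r]

theorem adjMatrix_mulVec_apply_of_adj_iff {α : Type*} [Ring α] (hr : ∀ x, r x x)
    (hG : ∀ x y, G.Adj x y ↔ x ≠ y ∧ r x y) (v : V → α) (x : V) :
    (G.adjMatrix α *ᵥ v) x = ∑ y with r x y, v y - v x := by
  have : G.neighborFinset x = ({y | r x y} : Finset V).erase x := by
    ext y; simp [hG, ne_comm]
  rw [adjMatrix_mulVec_apply, this, sum_erase_eq_sub (by simpa using hr x)]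

theorem add_one_eq_card_of_mulVec_eq_smul_of_adj_iff {K : Type*} [Field K] (hr : Equivalence r)
    (hG : ∀ x y, G.Adj x y ↔ x ≠ y ∧ r x y) {μ : K} {v : V → K}
    (hv : G.adjMatrix K *ᵥ v = μ • v) (hμ : μ + 1 ≠ 0) {x : V} (hx : v x ≠ 0) :
    μ + 1 = #{y | r x y} := by
  have hsum (z : V) : (μ + 1) * v z = ∑ y with r z y, v y := by
    have := adjMatrix_mulVec_apply_of_adj_iff hr.refl hG v z
    rw [hv, Pi.smul_apply, smul_eq_mul] at this
    linear_combination this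
  have hclass (z : V) (hz : r x z) : v z = v x := by
    refine mul_left_cancel₀ hμ ?_
    rw [hsum, hsum]
    congr 1
    ext y
    simp only [mem_filter, mem_univ, true_and]
    exact ⟨hr.trans hz, hr.trans (hr.symm hz)⟩
  refine mul_right_cancel₀ hx ?_
  rw [hsum, sum_congr rfl fun z hz => hclass z (mem_filter.mp hz).2, sum_const, nsmul_eq_mul]

theorem exists_int_eq_of_isRoot_charpoly_of_adj_iff {K : Type*} [Field K] (hr : Equivalence r)
    (hG : ∀ x y, G.Adj x y ↔ x ≠ y ∧ r x y) {μ : K} (hμ : (G.adjMatrix K).charpoly.IsRoot μ) :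
    ∃ k : ℤ, μ = k := by
  by_cases hμ1 : μ + 1 = 0
  · exact ⟨-1, by push_cast; linear_combination hμ1⟩
  obtain ⟨v, hv0, hv⟩ := Matrix.exists_mulVec_eq_smul_of_isRoot_charpoly hμ
  obtain ⟨x, hx⟩ := Function.ne_iff.mp hv0
  have := add_one_eq_card_of_mulVec_eq_smul_of_adj_iff hr hG hv hμ1 hx
  exact ⟨#{y | r x y} - 1, by push_cast; linear_combination this⟩

end SimpleGraph

theorem equivalence_commute_of_centralizer_comm {G : Type*} [Group G]
    (hAC : ∀ x : G, x ∉ Subgroup.center G →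
      ∀ y ∈ Subgroup.centralizer ({x} : Set G), ∀ z ∈ Subgroup.centralizer ({x} : Set G),
        y * z = z * y) :
    Equivalence fun x y : {x : G // x ∉ Subgroup.center G} => Commute (x : G) y where
  refl _ := Commute.refl _
  symm := Commute.symm
  trans {x y z} hxy hyz := hAC y y.2 x (Subgroup.mem_centralizer_singleton_iff.mpr hxy)
    z (Subgroup.mem_centralizer_singleton_iff.mpr hyz.symm)

theorem commGraph_integral_of_AC_general
    (G : Type*) [Group G] [Finite G]
    (hAC : ∀ x : G, x ∉ Subgroup.center G →
      ∀ y ∈ Subgroup.centralizer ({x} : Set G), ∀ z ∈ Subgroup.centralizer ({x} : Set G),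
        y * z = z * y) :
    ∀ r : ℝ, (commCharpoly G).IsRoot r → ∃ k : ℤ, r = (k : ℝ) := by
  classical
  let _ := Fintype.ofFinite G
  exact fun r hr => SimpleGraph.exists_int_eq_of_isRoot_charpoly_of_adj_iff
    (equivalence_commute_of_centralizer_comm hAC) (fun _ _ => Iff.rfl) hr

/-- The commuting graph of a finite non-abelian AC-group is integral:
every eigenvalue of its adjacency matrix is an integer. -/
theorem commGraph_integral_of_AC
    (G : Type*) [Group G] [Finite G]
    (hna : ¬ ∀ a b : G, a * b = b * a)
    (hAC : ∀ x : G, x ∉ Subgroup.center G →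
      ∀ y ∈ Subgroup.centralizer ({x} : Set G), ∀ z ∈ Subgroup.centralizer ({x} : Set G),
        y * z = z * y) :
    ∀ r : ℝ, (commCharpoly G).IsRoot r → ∃ k : ℤ, r = (k : ℝ) :=
  commGraph_integral_of_AC_general G hAC
end

section
/- For the quasidihedral group QD_{2^n} = ⟨a, b : a^{2^{n-1}} = b^2 = 1, bab^{-1} = a^{2^{n-2}-1}⟩ with n ≥ 4, the commuting graph Γ_{QD_{2^n}} is isomorphic to the disjoint union K_{2^{n-1}-2} ⊔ 2^{n-2}·K_2. -/
open Polynomial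

/-!
The cyclic subgroup `⟨a⟩` has order `2r` with `r = 2 ^ (n - 2)`, hence index 2, and conjugation
by `b` acts on it as `x ↦ x ^ (r - 1)`; so every element is `a ^ i` or `a ^ i * b`. Because
`r - 2 = 2 (r / 2 - 1)` with `r / 2 - 1` odd, `2r ∣ (r - 2) i ↔ r ∣ i`. Hence `a ^ i` commutes with
`a ^ j * b` iff `r ∣ i`, and `a ^ i * b` commutes with `a ^ j * b` iff `r ∣ i - j`. The centre is
therefore `⟨a ^ r⟩ = {1, a ^ r}`, the `2r - 2` non-central powers of `a` form a clique with no edge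
leaving it, and the `2r` elements `a ^ i * b` split into the `r` commuting pairs
`{a ^ i * b, a ^ (i + r) * b}`.
-/

open Subgroup

theorem two_mul_dvd_sub_two_mul_iff {r : ℕ} (hr : 4 ∣ r) (x : ℤ) :
    2 * (r : ℤ) ∣ (r - 2) * x ↔ (r : ℤ) ∣ x := by
  obtain ⟨s, rfl⟩ := hr
  push_cast
  have hcop : IsCoprime (4 * (s : ℤ)) (2 * s - 1) := ⟨s, -(2 * s + 1), by ring⟩
  rw [show (4 * (s : ℤ) - 2) * x = 2 * ((2 * s - 1) * x) by ring,
    mul_dvd_mul_iff_left two_ne_zero]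
  exact ⟨hcop.dvd_of_dvd_mul_left, fun h => h.mul_left _⟩

theorem zpow_mem_zpowers_pow_iff {G : Type*} [Group G] {a : G} {r : ℕ} (hr : r ∣ orderOf a)
    (i : ℤ) : a ^ i ∈ zpowers (a ^ r) ↔ (r : ℤ) ∣ i := by
  simp only [mem_zpowers_iff, ← zpow_natCast, ← zpow_mul]
  constructor
  · rintro ⟨k, hk⟩
    have hmod := (zpow_eq_zpow_iff_modEq.1 hk).dvd
    exact (dvd_sub_left (dvd_mul_right _ k)).1 ((Int.natCast_dvd_natCast.2 hr).trans hmod)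
  · rintro ⟨k, rfl⟩
    exact ⟨k, rfl⟩

theorem Fin.intCast_dvd_add_mul_sub_add_mul_iff {r : ℕ} (j j' : Fin r) (t t' : ℕ) :
    (r : ℤ) ∣ ((j + r * t : ℕ) : ℤ) - ((j' + r * t' : ℕ) : ℤ) ↔ j = j' := by
  rw [← Nat.modEq_iff_dvd, Nat.ModEq, Nat.add_mul_mod_self_left, Nat.add_mul_mod_self_left,
    Nat.mod_eq_of_lt j.2, Nat.mod_eq_of_lt j'.2, eq_comm, Fin.val_inj]

def Subgroup.equivComplOfIndexEqTwo {G : Type*} [Group G] {H : Subgroup G} (hH : H.index = 2)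
    {b : G} (hb : b ∉ H) : H ≃ {x : G // x ∉ H} where
  toFun h := ⟨h * b, by simp [mul_mem_iff_of_index_two hH, h.2, hb]⟩
  invFun x := ⟨x * b⁻¹, by simp [mul_mem_iff_of_index_two hH, x.2, hb]⟩
  left_inv h := by simp
  right_inv x := by simp

def SimpleGraph.IsClique.sumComplIso {V : Type*} {H : SimpleGraph V} {s : Set V}
    [DecidablePred (· ∈ s)] (hs : H.IsClique s) (hsep : ∀ x ∈ s, ∀ y ∉ s, ¬ H.Adj x y) :
    (⊤ : SimpleGraph s) ⊕g H.induce sᶜ ≃g H where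
  toEquiv := Equiv.Set.sumCompl s
  map_rel_iff' := by
    rintro (x | x) (y | y)
    · simpa [Subtype.ext_iff] using ⟨H.ne_of_adj, fun hxy => hs x.2 y.2 hxy⟩
    · simpa using hsep x x.2 y y.2
    · simpa using fun hxy => hsep y y.2 x x.2 hxy.symm
    · simp

theorem commGraph_adj {G : Type*} [Group G] {x y : {x : G // x ∉ center G}} :
    (commGraph G).Adj x y ↔ x ≠ y ∧ Commute (x : G) y :=
  Iff.rfl

structure IsSemidihedralPair {G : Type*} [Group G] (a b : G) (r : ℕ) : Prop where
  orderOf_eq : orderOf a = 2 * r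
  four_dvd : 4 ∣ r
  conj_eq : b * a * b⁻¹ = a ^ ((r : ℤ) - 1)

namespace IsSemidihedralPair

variable {G : Type*} [Group G] {a b : G} {r : ℕ}

theorem zpow_eq_zpow_iff (h : IsSemidihedralPair a b r) {i j : ℤ} :
    a ^ i = a ^ j ↔ 2 * (r : ℤ) ∣ j - i := by
  rw [zpow_eq_zpow_iff_modEq, h.orderOf_eq, Int.modEq_iff_dvd]
  push_cast
  rfl

theorem mul_zpow (h : IsSemidihedralPair a b r) (i : ℤ) :
    b * a ^ i = a ^ ((r - 1 : ℤ) * i) * b := by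
  rw [zpow_mul, ← h.conj_eq, conj_zpow, inv_mul_cancel_right]

theorem commute_zpow_zpow_mul_iff (h : IsSemidihedralPair a b r) (i j : ℤ) :
    Commute (a ^ i) (a ^ j * b) ↔ (r : ℤ) ∣ i := by
  have hl : a ^ i * (a ^ j * b) = a ^ (i + j) * b := by rw [← mul_assoc, ← zpow_add]
  have hr : a ^ j * b * a ^ i = a ^ (j + (r - 1) * i) * b := by
    rw [mul_assoc, h.mul_zpow, ← mul_assoc, ← zpow_add]
  rw [Commute, SemiconjBy, hl, hr, mul_left_inj, h.zpow_eq_zpow_iff,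
    ← two_mul_dvd_sub_two_mul_iff h.four_dvd]
  ring_nf

theorem commute_zpow_mul_iff (h : IsSemidihedralPair a b r) (i j : ℤ) :
    Commute (a ^ i * b) (a ^ j * b) ↔ (r : ℤ) ∣ i - j := by
  have hprod : ∀ k l : ℤ, a ^ k * b * (a ^ l * b) = a ^ (k + (r - 1) * l) * (b * b) := by
    intro k l
    rw [mul_assoc, ← mul_assoc b, h.mul_zpow, mul_assoc, ← mul_assoc, ← zpow_add]
  rw [Commute, SemiconjBy, hprod, hprod, mul_left_inj, h.zpow_eq_zpow_iff,
    ← two_mul_dvd_sub_two_mul_iff h.four_dvd]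
  ring_nf

theorem not_commute_zpow_mul (h : IsSemidihedralPair a b r) (i : ℤ) :
    ¬ Commute a (a ^ i * b) := by
  intro hc
  have h1 : r ∣ 1 := by exact_mod_cast (h.commute_zpow_zpow_mul_iff 1 i).1 (by rwa [zpow_one])
  have := h.four_dvd
  rw [Nat.dvd_one.1 h1] at this
  omega

theorem notMem_zpowers (h : IsSemidihedralPair a b r) : b ∉ zpowers a := by
  rintro ⟨k, rfl⟩
  exact h.not_commute_zpow_mul 0 (by simp [(Commute.refl a).zpow_right k])

theorem zpow_mul_notMem_zpowers (h : IsSemidihedralPair a b r) (i : ℤ) :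
    a ^ i * b ∉ zpowers a := by
  rw [mul_mem_cancel_left (zpow_mem (mem_zpowers a) i)]
  exact h.notMem_zpowers

theorem exists_zpow_or_zpow_mul (h : IsSemidihedralPair a b r) (hA : (zpowers a).index = 2)
    (g : G) : ∃ i : ℤ, g = a ^ i ∨ g = a ^ i * b := by
  by_cases hg : g ∈ zpowers a
  · obtain ⟨i, rfl⟩ := mem_zpowers_iff.1 hg
    exact ⟨i, .inl rfl⟩
  · have hgb : g * b⁻¹ ∈ zpowers a := by
      simp [mul_mem_iff_of_index_two hA, hg, h.notMem_zpowers]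
    obtain ⟨i, hi⟩ := mem_zpowers_iff.1 hgb
    exact ⟨i, .inr (by rw [hi, inv_mul_cancel_right])⟩

theorem center_eq_zpowers (h : IsSemidihedralPair a b r) (hA : (zpowers a).index = 2) :
    center G = zpowers (a ^ r) := by
  have hdvd : r ∣ orderOf a := h.orderOf_eq ▸ dvd_mul_left r 2
  ext x
  obtain ⟨i, rfl | rfl⟩ := h.exists_zpow_or_zpow_mul hA x
  · rw [zpow_mem_zpowers_pow_iff hdvd, mem_center_iff]
    constructor
    · intro hc
      exact (h.commute_zpow_zpow_mul_iff i 0).1 (by rw [zpow_zero, one_mul]; exact (hc b).symm)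
    · intro hi g
      obtain ⟨j, rfl | rfl⟩ := h.exists_zpow_or_zpow_mul hA g
      · exact (Commute.zpow_zpow_self a j i).eq
      · exact ((h.commute_zpow_zpow_mul_iff i j).2 hi).eq.symm
  · exact iff_of_false (fun hc => h.not_commute_zpow_mul i (mem_center_iff.1 hc a))
      fun hx => h.zpow_mul_notMem_zpowers i (zpowers_le.2 (pow_mem (mem_zpowers a) r) hx)

theorem center_le_zpowers (h : IsSemidihedralPair a b r) (hA : (zpowers a).index = 2) :
    center G ≤ zpowers a := by
  rw [h.center_eq_zpowers hA]
  exact zpowers_le.2 (pow_mem (mem_zpowers a) r)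

section Finite

variable [Finite G]

theorem card_center (h : IsSemidihedralPair a b r) (hA : (zpowers a).index = 2) :
    Nat.card (center G) = 2 := by
  have hr : r ≠ 0 := by
    have := (isOfFinOrder_of_finite a).orderOf_pos
    rw [h.orderOf_eq] at this
    omega
  rw [h.center_eq_zpowers hA, Nat.card_zpowers, orderOf_pow_of_dvd hr (by simp [h.orderOf_eq]),
    h.orderOf_eq, Nat.mul_div_cancel _ (Nat.pos_of_ne_zero hr)]

theorem card_noncentral_zpowers (h : IsSemidihedralPair a b r) (hA : (zpowers a).index = 2) :
    Nat.card {x : {x : G // x ∉ center G} // (x : G) ∈ zpowers a} = 2 * r - 2 := by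
  have hsub : (center G : Set G) ⊆ zpowers a := h.center_le_zpowers hA
  have hdiff := Set.ncard_sdiff_add_ncard_of_subset hsub
  rw [← Nat.card_coe_set_eq, ← Nat.card_coe_set_eq, ← Nat.card_coe_set_eq] at hdiff
  simp only [SetLike.coe_sort_coe, Nat.card_zpowers, h.orderOf_eq, h.card_center hA] at hdiff
  rw [Nat.card_congr ((Equiv.subtypeSubtypeEquivSubtypeInter _ _).trans
    (Equiv.subtypeEquivRight fun _ => and_comm))]
  exact Nat.eq_sub_of_add_eq hdiff

noncomputable def reflectionEquiv (h : IsSemidihedralPair a b r) (hA : (zpowers a).index = 2) :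
    Fin r × Fin 2 ≃ ↥({x | (x : G) ∈ zpowers a} : Set {x : G // x ∉ center G})ᶜ :=
  (Equiv.prodComm _ _).trans <| finProdFinEquiv.trans <| (finCongr h.orderOf_eq.symm).trans <|
    (finEquivZPowers (isOfFinOrder_of_finite a)).trans <|
    (equivComplOfIndexEqTwo hA h.notMem_zpowers).trans
    (Equiv.subtypeSubtypeEquivSubtype fun hx hz => hx (h.center_le_zpowers hA hz)).symm

theorem coe_reflectionEquiv (h : IsSemidihedralPair a b r) (hA : (zpowers a).index = 2)
    (p : Fin r × Fin 2) : ((h.reflectionEquiv hA p : {x : G // x ∉ center G}) : G) =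
      a ^ (p.1 + r * p.2 : ℕ) * b :=
  rfl

noncomputable def reflectionIso (h : IsSemidihedralPair a b r) (hA : (zpowers a).index = 2) :
    completeUnion r 2 ≃g
      (commGraph G).induce ({x | (x : G) ∈ zpowers a} : Set {x : G // x ∉ center G})ᶜ where
  toEquiv := h.reflectionEquiv hA
  map_rel_iff' {p q} := by
    simp only [SimpleGraph.comap_adj, Function.Embedding.subtype_apply, commGraph_adj,
      Subtype.coe_injective.ne_iff, (h.reflectionEquiv hA).injective.ne_iff, coe_reflectionEquiv,
      ← zpow_natCast, commute_zpow_mul_iff h, Fin.intCast_dvd_add_mul_sub_add_mul_iff]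
    rfl

theorem nonempty_commGraph_iso (h : IsSemidihedralPair a b r) (hA : (zpowers a).index = 2) :
    Nonempty (commGraph G ≃g (⊤ : SimpleGraph (Fin (2 * r - 2))) ⊕g completeUnion r 2) := by
  classical
  let s : Set {x : G // x ∉ center G} := {x | (x : G) ∈ zpowers a}
  have hs : (commGraph G).IsClique s := by
    rintro x ⟨i, hi⟩ y ⟨j, hj⟩ hxy
    exact ⟨hxy, hi ▸ hj ▸ Commute.zpow_zpow_self a i j⟩
  have hsep : ∀ x ∈ s, ∀ y ∉ s, ¬ (commGraph G).Adj x y := by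
    rintro ⟨x, hxZ⟩ ⟨i, rfl⟩ ⟨y, _⟩ hy ⟨-, hxy⟩
    obtain ⟨j, rfl | rfl⟩ := h.exists_zpow_or_zpow_mul hA y
    · exact hy (zpow_mem (mem_zpowers a) j)
    · refine hxZ ?_
      rw [h.center_eq_zpowers hA, zpow_mem_zpowers_pow_iff (by simp [h.orderOf_eq])]
      exact (h.commute_zpow_zpow_mul_iff i j).1 hxy
  exact ⟨(hs.sumComplIso hsep).symm.trans <| SimpleGraph.Iso.sumCongr
    (.completeGraph (Finite.equivFinOfCardEq (h.card_noncentral_zpowers hA)))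
    (h.reflectionIso hA).symm⟩

end Finite

end IsSemidihedralPair

theorem commGraph_quasidihedral_general
    (n : ℕ) (hn : 4 ≤ n) (G : Type*) [Group G] [Finite G]
    (a b : G) (ha : orderOf a = 2 ^ (n - 1))
    (hrel : b * a * b⁻¹ = a ^ (2 ^ (n - 2) - 1))
    (hcard : Nat.card G = 2 ^ n) :
    Nonempty (commGraph G ≃g
      ((⊤ : SimpleGraph (Fin (2 ^ (n - 1) - 2))) ⊕g completeUnion (2 ^ (n - 2)) 2)) := by
  have h2 : 2 ^ (n - 1) = 2 * 2 ^ (n - 2) := by rw [← pow_succ']; congr 1; omega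
  have hpair : IsSemidihedralPair a b (2 ^ (n - 2)) :=
    ⟨ha.trans h2, pow_dvd_pow 2 (by omega : 2 ≤ n - 2),
      by rw [hrel, ← zpow_natCast, Nat.cast_sub Nat.one_le_two_pow, Nat.cast_one]⟩
  have hA : (zpowers a).index = 2 := by
    have hmul := (zpowers a).index_mul_card
    have h3 : 2 ^ n = 2 * 2 ^ (n - 1) := by rw [← pow_succ']; congr 1; omega
    rw [Nat.card_zpowers, ha, hcard, h3] at hmul
    exact Nat.eq_of_mul_eq_mul_right (by positivity) hmul
  rw [h2]
  exact hpair.nonempty_commGraph_iso hA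

/-- For `n ≥ 4`, the commuting graph of the quasidihedral group
`QD_{2^n} = ⟨a, b : a^{2^{n-1}} = b^2 = 1, b a b⁻¹ = a^{2^{n-2}-1}⟩`
is isomorphic to `K_{2^{n-1}-2} ⊔ 2^{n-2}·K_2`. -/
theorem commGraph_quasidihedral
    (n : ℕ) (hn : 4 ≤ n) (G : Type*) [Group G] [Finite G]
    (a b : G) (ha : orderOf a = 2 ^ (n - 1)) (hb : orderOf b = 2)
    (hrel : b * a * b⁻¹ = a ^ (2 ^ (n - 2) - 1))
    (hcard : Nat.card G = 2 ^ n)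
    (hgen : Subgroup.closure ({a, b} : Set G) = ⊤) :
    Nonempty (commGraph G ≃g
      ((⊤ : SimpleGraph (Fin (2 ^ (n - 1) - 2))) ⊕g completeUnion (2 ^ (n - 2)) 2)) :=
  commGraph_quasidihedral_general n hn G a b ha hrel hcard
end

section
/- For k ≥ 2, the commuting graph of PSL(2, 2^k) is isomorphic to (2^k + 1)·K_{2^k - 1} ⊔ 2^{k-1}(2^k + 1)·K_{2^k - 2} ⊔ 2^{k-1}(2^k - 1)·K_{2^k}. -/
open Polynomial

/-!
In characteristic 2 the center of `SL(2, F)` is trivial, so `PSL(2, q) = SL(2, q)`. The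
centralizer of a non-scalar `2 × 2` matrix `g` is the commutative algebra `F[g] = {a + b g}`, so
commuting is an equivalence relation on the non-identity elements and the commuting graph is a
disjoint union of cliques, one per class. If `tr g = t`, then `det (a + b g) = a² + t a b + b²`.
This form has `1 + (q - 1) r(t)` zeros, where `r(t) ∈ {0, 1, 2}` is the number of roots of
`X² + t X + 1` (and `r(t) = 1` exactly for `t = 0`), and, every element of `F` being a square, it
takes each nonzero value equally often. So the centralizer of `g` has `q + 1 - r(t)` elements and
the clique of `g` has `q - r(t)`. There are `q (q - 1 + r(t))` elements of trace `t`, and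
`∑ₜ r(t) = q - 1` since each `x ≠ 0` is a root for exactly one `t`; this fixes how many traces
have each value of `r`, hence the number of cliques of each size, and two disjoint unions of
cliques with the same numbers of cliques of each size are isomorphic.
-/

open Function

namespace SimpleGraph

variable {V W ι κ : Type*}

def ofSetoid (s : Setoid V) : SimpleGraph V where
  Adj x y := x ≠ y ∧ s x y
  symm := ⟨fun _ _ h => ⟨h.1.symm, s.symm h.2⟩⟩
  loopless := ⟨fun _ h => h.1 rfl⟩

def ofSetoidKerCongr {f : V → ι} {g : W → κ} (e : V ≃ W) {σ : ι → κ} (hσ : Injective σ)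
    (h : ∀ x, g (e x) = σ (f x)) : ofSetoid (Setoid.ker f) ≃g ofSetoid (Setoid.ker g) :=
  ⟨e, fun {x y} => by simp only [ofSetoid, Setoid.ker_def, h, hσ.eq_iff, e.injective.ne_iff]⟩

end SimpleGraph

theorem Nat.card_subtype_comp_eq_mul {α β : Type*} [Finite α] [Finite β] (f : α → β)
    {P : β → Prop} {c : ℕ} (h : ∀ b, P b → Nat.card {a // f a = b} = c) :
    Nat.card {a // P (f a)} = Nat.card {b // P b} * c := by
  have := Fintype.ofFinite {b // P b}
  rw [← Nat.card_congr (Equiv.sigmaSubtypeFiberEquivSubtype f fun _ => Iff.rfl), Nat.card_sigma,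
    Finset.sum_congr rfl fun b _ => h b.1 b.2, Finset.sum_const, smul_eq_mul, Finset.card_univ,
    Nat.card_eq_fintype_card]

theorem Quotient.card_fiber_card_eq_zero {α : Type*} [Finite α] (s : Setoid α) :
    Nat.card {c : Quotient s // Nat.card {a // Quotient.mk s a = c} = 0} = 0 :=
  have : IsEmpty {c : Quotient s // Nat.card {a // Quotient.mk s a = c} = 0} :=
    ⟨fun ⟨c, hc⟩ => by
      induction c using Quotient.inductionOn with
      | h a => exact (Nat.card_pos_iff.mpr ⟨⟨⟨a, rfl⟩⟩, inferInstance⟩).ne' hc⟩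
  Nat.card_of_isEmpty

theorem exists_equiv_comp_eq_of_card_fiber_eq {α β γ δ : Type*} [Finite α] [Finite β] [Finite γ]
    [Finite δ] (f : α → γ) (g : β → δ)
    (h : ∀ n, Nat.card {c // Nat.card {a // f a = c} = n} =
      Nat.card {d // Nat.card {b // g b = d} = n}) :
    ∃ (σ : γ ≃ δ) (e : α ≃ β), ∀ a, g (e a) = σ (f a) := by
  let ψ (n : ℕ) := Classical.choice (Finite.card_eq.mp (h n))
  let σ : γ ≃ δ := Equiv.ofFiberEquiv ψ
  have hσ (c : γ) : Nat.card {b // g b = σ c} = Nat.card {a // f a = c} :=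
    Equiv.ofFiberEquiv_map ψ c
  have hfiber (d : δ) : Nat.card {a // σ (f a) = d} = Nat.card {b // g b = d} := by
    rw [← σ.apply_symm_apply d, hσ]
    exact Nat.card_congr (Equiv.subtypeEquivRight fun a => σ.apply_eq_iff_eq)
  exact ⟨σ, Equiv.ofFiberEquiv fun d => Classical.choice (Finite.card_eq.mp (hfiber d)),
    Equiv.ofFiberEquiv_map _⟩

def commGraphCongr {G H : Type*} [Group G] [Group H] (e : G ≃* H) : commGraph G ≃g commGraph H :=
  ⟨e.toEquiv.subtypeEquiv fun x => by
      simp [Subgroup.mem_center_iff, e.surjective.forall, ← map_mul, e.injective.eq_iff],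
    fun {x y} => by simp [commGraph, ← map_mul, e.injective.eq_iff, Subtype.ext_iff]⟩

section TwoByTwo

open Matrix

variable {F : Type*} [Field F]

theorem exists_eq_mul_of_cross_eq_zero {q r d y z w : F} (hne : q ≠ 0 ∨ r ≠ 0 ∨ d ≠ 0)
    (h₁ : y * r = q * z) (h₂ : q * w = y * d) (h₃ : r * w = z * d) :
    ∃ b, y = b * q ∧ z = b * r ∧ w = b * d := by
  rcases hne with hq | hr | hd
  · exact ⟨y / q, by field_simp, by field_simp; linear_combination -h₁,
      by field_simp; linear_combination h₂⟩
  · exact ⟨z / r, by field_simp; linear_combination h₁, by field_simp,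
      by field_simp; linear_combination h₃⟩
  · exact ⟨w / d, by field_simp; linear_combination -h₂, by field_simp; linear_combination -h₃,
      by field_simp⟩

theorem Matrix.exists_eq_smul_one_add_smul_of_commute {g B : Matrix (Fin 2) (Fin 2) F}
    (hg : ∀ c, g ≠ scalar (Fin 2) c) (h : Commute B g) : ∃ a b : F, B = a • 1 + b • g := by
  have hne : g 0 1 ≠ 0 ∨ g 1 0 ≠ 0 ∨ g 0 0 - g 1 1 ≠ 0 := by
    by_contra! h0
    refine hg (g 0 0) (Matrix.ext fun i j => ?_)
    fin_cases i <;> fin_cases j <;> simp [h0.1, h0.2.1, sub_eq_zero.mp h0.2.2]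
  have hij (i j : Fin 2) := congrFun (congrFun h.eq i) j
  simp only [mul_apply, Fin.sum_univ_two] at hij
  obtain ⟨b, hb₁, hb₂, hb₃⟩ := exists_eq_mul_of_cross_eq_zero (y := B 0 1) (z := B 1 0)
    (w := B 0 0 - B 1 1) hne (by linear_combination hij 0 0) (by linear_combination hij 0 1)
    (by linear_combination -hij 1 0)
  refine ⟨B 0 0 - b * g 0 0, b, Matrix.ext fun i j => ?_⟩
  fin_cases i <;> fin_cases j <;> simp [hb₁, hb₂]
  linear_combination -hb₃

theorem Matrix.smul_one_add_smul_injective {g : Matrix (Fin 2) (Fin 2) F}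
    (hg : ∀ c, g ≠ scalar (Fin 2) c) :
    Injective fun p : F × F => p.1 • (1 : Matrix (Fin 2) (Fin 2) F) + p.2 • g := by
  rintro ⟨a, b⟩ ⟨a', b'⟩ h
  simp only at h
  obtain rfl : b = b' := by
    by_contra hb
    have h' : (b - b') • g = (a' - a) • (1 : Matrix (Fin 2) (Fin 2) F) := by
      rw [sub_smul, sub_smul, sub_eq_sub_iff_add_eq_add, add_comm, h]
    refine hg ((b - b')⁻¹ * (a' - a)) ?_
    rw [← inv_smul_smul₀ (sub_ne_zero.mpr hb) g, h', smul_smul, smul_one_eq_diagonal,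
      scalar_apply]
  obtain rfl : a = a' := by simpa using congrFun (congrFun h 0) 0
  rfl

def normForm {R : Type*} [CommRing R] (t : R) (p : R × R) : R :=
  p.1 ^ 2 + t * p.1 * p.2 + p.2 ^ 2

theorem Matrix.det_smul_one_add_smul {R : Type*} [CommRing R] (g : Matrix (Fin 2) (Fin 2) R)
    (a b : R) : (a • 1 + b • g).det = a ^ 2 + g.trace * a * b + g.det * b ^ 2 := by
  simp [det_fin_two, trace_fin_two]
  ring

end TwoByTwo

namespace Matrix.SpecialLinearGroup

open scoped MatrixGroups
open Subgroup (center)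

variable {F : Type*} [Field F]

local notation "V" => {g : SL(2, F) // g ∉ center SL(2, F)}

theorem commute_iff_coe {a b : SL(2, F)} :
    Commute a b ↔ Commute (a : Matrix (Fin 2) (Fin 2) F) b := by
  rw [Commute, SemiconjBy, Commute, SemiconjBy, ← coe_mul, ← coe_mul]
  exact Subtype.ext_iff

theorem coe_ne_scalar_of_notMem_center {g : SL(2, F)} (hg : g ∉ center SL(2, F)) (c : F) :
    (g : Matrix (Fin 2) (Fin 2) F) ≠ scalar (Fin 2) c := fun h =>
  hg <| mem_center_iff.mpr ⟨c, by simpa [h, det_fin_two, sq] using g.2, h.symm⟩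

theorem commute_trans_of_notMem_center {a g b : SL(2, F)} (hg : g ∉ center SL(2, F))
    (hag : Commute a g) (hgb : Commute g b) : Commute a b := by
  rw [commute_iff_coe] at *
  obtain ⟨x, y, hx⟩ :=
    exists_eq_smul_one_add_smul_of_commute (coe_ne_scalar_of_notMem_center hg) hag
  obtain ⟨z, w, hz⟩ :=
    exists_eq_smul_one_add_smul_of_commute (coe_ne_scalar_of_notMem_center hg) hgb.symm
  have hxg : Commute (x • 1 + y • (g : Matrix (Fin 2) (Fin 2) F)) g :=
    ((Commute.one_left _).smul_left x).add_left ((Commute.refl _).smul_left y)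
  rw [hx, hz]
  exact ((Commute.one_right _).smul_right z).add_right (hxg.smul_right w)

variable (F) in
def commSetoid : Setoid V where
  r x y := Commute (x : SL(2, F)) y
  iseqv := ⟨fun _ => Commute.refl _, Commute.symm,
    fun {_ y _} hxy hyz => commute_trans_of_notMem_center y.2 hxy hyz⟩

theorem commGraph_eq_ofSetoid : commGraph SL(2, F) = SimpleGraph.ofSetoid (commSetoid F) := rfl

theorem det_smul_one_add_smul_eq_normForm (g : SL(2, F)) (a b : F) :
    (a • 1 + b • (g : Matrix (Fin 2) (Fin 2) F)).det =
      normForm (g : Matrix (Fin 2) (Fin 2) F).trace (a, b) := by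
  rw [det_smul_one_add_smul, g.2, one_mul]
  rfl

noncomputable def normFormEquivCentralizer {g : SL(2, F)} (hg : g ∉ center SL(2, F)) :
    {p : F × F // normForm (g : Matrix (Fin 2) (Fin 2) F).trace p = 1} ≃
      {h : SL(2, F) // Commute h g} :=
  Equiv.ofBijective (fun p => ⟨⟨p.1.1 • 1 + p.1.2 • (g : Matrix (Fin 2) (Fin 2) F), by
      rw [det_smul_one_add_smul_eq_normForm, p.2]⟩, commute_iff_coe.mpr <|
        ((Commute.one_left _).smul_left _).add_left ((Commute.refl _).smul_left _)⟩) <| by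
    refine ⟨fun p p' h => Subtype.ext <| smul_one_add_smul_injective
      (coe_ne_scalar_of_notMem_center hg) (congrArg (fun h : {h : SL(2, F) // Commute h g} =>
        (h.1 : Matrix (Fin 2) (Fin 2) F)) h), ?_⟩
    rintro ⟨h, hh⟩
    obtain ⟨a, b, hab⟩ := exists_eq_smul_one_add_smul_of_commute
      (coe_ne_scalar_of_notMem_center hg) (commute_iff_coe.mp hh)
    refine ⟨⟨(a, b), ?_⟩, Subtype.ext (Subtype.ext hab.symm)⟩
    rw [← det_smul_one_add_smul_eq_normForm, ← hab]
    exact h.2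

theorem center_eq_bot_of_charTwo [CharP F 2] : center SL(2, F) = ⊥ := by
  refine eq_bot_iff.mpr fun g hg => ?_
  obtain ⟨r, hr, hrg⟩ := mem_center_iff.mp hg
  obtain rfl : r = 1 := CharTwo.sq_injective (by simpa using hr)
  exact Subgroup.mem_bot.mpr (Subtype.ext (by simp [← hrg]))

theorem trace_coe_one_of_charTwo [CharP F 2] :
    ((1 : SL(2, F)) : Matrix (Fin 2) (Fin 2) F).trace = 0 := by
  simp [CharTwo.two_eq_zero]

theorem card_noncentral_eq [CharP F 2] {P : SL(2, F) → Prop} (h1 : ¬P 1) :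
    Nat.card {x : V // P x} = Nat.card {g // P g} :=
  Nat.card_congr <| Equiv.subtypeSubtypeEquivSubtype fun {g} hg => by
    rw [center_eq_bot_of_charTwo, Subgroup.mem_bot]
    rintro rfl
    exact h1 hg

theorem card_noncentral_add_one [CharP F 2] [Finite F] {P : SL(2, F) → Prop} (h1 : P 1) :
    Nat.card {x : V // P x} + 1 = Nat.card {g // P g} := by
  have e : {x : V // P x} ≃ ({g | P g} \ {1} : Set SL(2, F)) :=
    (Equiv.subtypeSubtypeEquivSubtypeInter (· ∉ center SL(2, F)) P).trans <|
      Equiv.subtypeEquivRight fun g => by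
        simp [center_eq_bot_of_charTwo, Subgroup.mem_bot, and_comm]
  rw [Nat.card_congr e, Nat.card_coe_set_eq,
    Set.ncard_sdiff_singleton_add_one (s := {g | P g}) h1 (Set.toFinite _), ← Nat.card_coe_set_eq]
  rfl

end Matrix.SpecialLinearGroup

section RootCount

variable {F : Type*} [Field F]

noncomputable def rootCount (t : F) : ℕ := Nat.card {x : F // x ^ 2 + t * x + 1 = 0}

variable [CharP F 2]

theorem sq_add_mul_add_one_eq_zero_iff {t r x : F} (hr : r ^ 2 + t * r + 1 = 0) :
    x ^ 2 + t * x + 1 = 0 ↔ x = r ∨ x = r + t := by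
  have h2 : (2 : F) = 0 := CharTwo.two_eq_zero
  constructor
  · intro hx
    have : (x - r) * (x - (r + t)) = 0 := by
      linear_combination hx - hr + (-r * x - t * x + r ^ 2 + r * t) * h2
    simpa [sub_eq_zero] using this
  · rintro (rfl | rfl)
    · exact hr
    · linear_combination hr + (r * t + t ^ 2) * h2

theorem rootCount_of_root {t r : F} (hr : r ^ 2 + t * r + 1 = 0) :
    rootCount t = ({r, r + t} : Set F).ncard :=
  Nat.card_congr (Equiv.subtypeEquivRight fun _ => sq_add_mul_add_one_eq_zero_iff hr)

theorem rootCount_zero : rootCount (0 : F) = 1 := by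
  rw [rootCount_of_root (r := 1) (by linear_combination CharTwo.two_eq_zero (R := F)), add_zero,
    Set.pair_eq_singleton, Set.ncard_singleton]

theorem rootCount_eq_zero_or_two {t : F} (ht : t ≠ 0) : rootCount t = 0 ∨ rootCount t = 2 := by
  by_cases h : ∃ r : F, r ^ 2 + t * r + 1 = 0
  · obtain ⟨r, hr⟩ := h
    exact .inr <| by rw [rootCount_of_root hr, Set.ncard_pair (by simpa using ht)]
  · have : IsEmpty {x : F // x ^ 2 + t * x + 1 = 0} := ⟨fun x => h ⟨x.1, x.2⟩⟩
    exact .inl Nat.card_of_isEmpty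

theorem rootCount_le_two (t : F) : rootCount t ≤ 2 := by
  rcases eq_or_ne t 0 with rfl | ht
  · rw [rootCount_zero]; omega
  · rcases rootCount_eq_zero_or_two ht with h | h <;> omega

theorem rootCount_eq_one_iff {t : F} : rootCount t = 1 ↔ t = 0 := by
  refine ⟨fun h => ?_, fun h => h ▸ rootCount_zero⟩
  by_contra ht
  rcases rootCount_eq_zero_or_two ht with h' | h' <;> omega

theorem card_rootCount_eq_one : Nat.card {t : F // rootCount t = 1} = 1 := by
  rw [Nat.card_congr (Equiv.subtypeEquivRight fun t => rootCount_eq_one_iff), Nat.card_unique]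

end RootCount

section FiniteField

variable {F : Type*} [Field F] [Fintype F]

local notation "q" => Fintype.card F

theorem card_subtype_ne_zero : Nat.card {x : F // x ≠ 0} = q - 1 := by
  classical
  rw [← Nat.card_congr unitsEquivNeZero, Nat.card_eq_fintype_card, Fintype.card_units]

theorem sum_ite_eq_zero_const [DecidableEq F] (u v : ℕ) :
    ∑ a : F, (if a = 0 then u else v) = u + (q - 1) * v := by
  rw [Fintype.sum_eq_add_sum_compl 0, if_pos rfl,
    Finset.sum_congr rfl fun a ha => if_neg (Finset.mem_compl.mp ha ∘ Finset.mem_singleton.mpr),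
    Finset.sum_const, Finset.card_compl, Finset.card_singleton, smul_eq_mul]

theorem card_pairs_mul_eq [DecidableEq F] (e : F) :
    Nat.card {p : F × F // p.1 * p.2 = e} = q - 1 + if e = 0 then q else 0 := by
  have hfiber (b : F) :
      Nat.card {c : F // b * c = e} = if b = 0 then (if e = 0 then q else 0) else 1 := by
    split_ifs with hb he
    · simp [hb, he, Nat.card_eq_fintype_card]
    · simp [hb, Ne.symm he]
    · rw [← Nat.card_unique (α := {c : F // c = b⁻¹ * e})]
      exact Nat.card_congr (Equiv.subtypeEquivRight fun c => (eq_inv_mul_iff_mul_eq₀ hb).symm)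
  rw [Nat.card_congr (Equiv.subtypeProdEquivSigmaSubtype fun b c => b * c = e), Nat.card_sigma,
    Finset.sum_congr rfl fun b _ => hfiber b, sum_ite_eq_zero_const, mul_one, add_comm]

theorem sum_rootCount : ∑ t : F, rootCount t = q - 1 := by
  unfold rootCount
  rw [← card_subtype_ne_zero, ← Nat.card_sigma]
  refine Nat.card_congr
    { toFun := fun p => ⟨p.2.1, fun h0 => by simpa [h0] using p.2.2⟩
      invFun := fun x => ⟨-(x.1 + x.1⁻¹), x.1, by field_simp [x.2]; ring⟩
      left_inv := fun ⟨t, x, hx⟩ => Sigma.subtype_ext ?_ rfl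
      right_inv := fun _ => rfl }
  have hx0 : x ≠ 0 := fun h0 => by simp [h0] at hx
  field_simp
  linear_combination -hx

theorem card_normForm_eq_zero (t : F) :
    Nat.card {p : F × F // normForm t p = 0} = 1 + (q - 1) * rootCount t := by
  classical
  have hfiber (a : F) :
      Nat.card {b : F // normForm t (a, b) = 0} = if a = 0 then 1 else rootCount t := by
    split_ifs with ha
    · simp [ha, normForm]
    · refine (Nat.card_congr ((Equiv.mulRight₀ a ha).subtypeEquiv fun x => ?_)).symm
      have : normForm t (a, x * a) = a ^ 2 * (x ^ 2 + t * x + 1) := by unfold normForm; ring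
      simp [this, ha]
  rw [Nat.card_congr (Equiv.subtypeProdEquivSigmaSubtype fun a b => normForm t (a, b) = 0),
    Nat.card_sigma, Finset.sum_congr rfl fun a _ => hfiber a, sum_ite_eq_zero_const]

variable [CharP F 2]

theorem card_normForm_eq_of_ne_zero (t : F) {c : F} (hc : c ≠ 0) :
    Nat.card {p : F × F // normForm t p = c} = Nat.card {p : F × F // normForm t p = 1} := by
  obtain ⟨s, rfl⟩ := isSquare_of_charTwo' c
  have hs : s ≠ 0 := by rintro rfl; simp at hc
  refine (Nat.card_congr (((Equiv.mulLeft₀ s hs).prodCongr (Equiv.mulLeft₀ s hs)).subtypeEquiv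
    fun p => ?_)).symm
  have : normForm t (s * p.1, s * p.2) = s * s * normForm t p := by unfold normForm; ring
  change _ ↔ normForm t (s * p.1, s * p.2) = s * s
  rw [this, mul_eq_left₀ hc]

theorem card_normForm_eq_one_add_rootCount (t : F) :
    Nat.card {p : F × F // normForm t p = 1} + rootCount t = q + 1 := by
  have hne : Nat.card {p : F × F // normForm t p ≠ 0} =
      (q - 1) * Nat.card {p : F × F // normForm t p = 1} := by
    rw [Nat.card_subtype_comp_eq_mul (normForm t) (P := (· ≠ 0)) fun c hc =>
      card_normForm_eq_of_ne_zero t hc, card_subtype_ne_zero]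
  have htot : Nat.card {p : F × F // normForm t p = 0} +
      Nat.card {p : F × F // normForm t p ≠ 0} = q * q := by
    classical
    rw [← Nat.card_sum, Nat.card_congr (Equiv.sumCompl _), Nat.card_prod, Nat.card_eq_fintype_card]
  rw [hne, card_normForm_eq_zero] at htot
  obtain ⟨p, hp⟩ : ∃ p, q = p + 2 := ⟨q - 2, by have := Fintype.one_lt_card (α := F); omega⟩
  rw [hp, show p + 2 - 1 = p + 1 by omega] at htot
  rw [hp]
  refine Nat.eq_of_mul_eq_mul_left (show 0 < p + 1 by omega) ?_
  linear_combination htot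

theorem card_rootCount_partition :
    Nat.card {t : F // rootCount t = 0} + Nat.card {t : F // rootCount t = 1} +
      Nat.card {t : F // rootCount t = 2} = q ∧
    Nat.card {t : F // rootCount t = 1} + 2 * Nat.card {t : F // rootCount t = 2} = q - 1 := by
  have hT (r : ℕ) :
      Nat.card {t : F // rootCount t = r} = ∑ t : F, if rootCount t = r then 1 else 0 := by
    rw [Nat.card_eq_fintype_card, Fintype.card_subtype, Finset.card_filter]
  simp only [hT, Finset.mul_sum, ← Finset.sum_add_distrib]
  constructor
  · rw [← Finset.card_univ, Finset.card_eq_sum_ones]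
    refine Finset.sum_congr rfl fun t _ => ?_
    have := rootCount_le_two t
    split_ifs <;> omega
  · rw [← sum_rootCount]
    refine Finset.sum_congr rfl fun t _ => ?_
    have := rootCount_le_two t
    split_ifs <;> omega

end FiniteField

namespace Matrix.SpecialLinearGroup

open scoped MatrixGroups
open Subgroup (center)

variable {F : Type*} [Field F] [Fintype F]

local notation "q" => Fintype.card F
local notation "V" => {g : SL(2, F) // g ∉ center SL(2, F)}

def traceFiberEquiv (t : F) :
    {g : SL(2, F) // (g : Matrix (Fin 2) (Fin 2) F).trace = t} ≃
      Σ a : F, {p : F × F // p.1 * p.2 = a * (t - a) - 1} where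
  toFun g := ⟨g.1 0 0, (g.1 0 1, g.1 1 0), by
    have hdet := g.1.2
    have htr := g.2
    rw [det_fin_two] at hdet
    rw [trace_fin_two] at htr
    linear_combination -hdet + g.1 0 0 * htr⟩
  invFun x := ⟨⟨!![x.1, x.2.1.1; x.2.1.2, t - x.1], by
    rw [det_fin_two_of]; linear_combination -x.2.2⟩, by simp [trace_fin_two_of]⟩
  left_inv g := by
    have htr := g.2
    rw [trace_fin_two] at htr
    refine Subtype.ext (Subtype.ext ?_)
    simp only [← htr, add_sub_cancel_left]
    exact (eta_fin_two _).symm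
  right_inv _ := rfl

theorem card_trace_eq (t : F) :
    Nat.card {g : SL(2, F) // (g : Matrix (Fin 2) (Fin 2) F).trace = t} =
      q * (q - 1 + rootCount t) := by
  classical
  have hroots : Fintype.card {a : F // a * (t - a) - 1 = 0} = rootCount t := by
    rw [← Nat.card_eq_fintype_card]
    exact Nat.card_congr <| (Equiv.neg F).subtypeEquiv fun a => by
      rw [Equiv.neg_apply, ← neg_eq_zero]
      constructor <;> intro h <;> linear_combination h
  rw [Nat.card_congr (traceFiberEquiv t), Nat.card_sigma,
    Finset.sum_congr rfl fun a _ => card_pairs_mul_eq _, Finset.sum_add_distrib,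
    ← Finset.sum_filter, Finset.sum_const, Finset.sum_const, smul_eq_mul, smul_eq_mul,
    Finset.card_univ, ← Fintype.card_subtype, hroots]
  ring

theorem card_class_add_card_center (x : V) :
    Nat.card {y // Quotient.mk (commSetoid F) y = Quotient.mk _ x} + Nat.card (center SL(2, F)) =
      Nat.card {h : SL(2, F) // Commute h x} := by
  classical
  have eClass : {y // Quotient.mk (commSetoid F) y = Quotient.mk _ x} ≃
      {h : {h : SL(2, F) // Commute h x} // h.1 ∉ center SL(2, F)} :=
    (Equiv.subtypeEquivRight fun _ => Quotient.eq).trans <|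
      (Equiv.subtypeSubtypeEquivSubtypeInter (· ∉ center SL(2, F)) (Commute · x.1)).trans <|
        (Equiv.subtypeEquivRight fun _ => and_comm).trans
          (Equiv.subtypeSubtypeEquivSubtypeInter (Commute · x.1) (· ∉ center SL(2, F))).symm
  have eCenter :
      {h : {h : SL(2, F) // Commute h x} // ¬h.1 ∉ center SL(2, F)} ≃ center SL(2, F) :=
    (Equiv.subtypeEquivRight fun _ => not_not).trans <|
      Equiv.subtypeSubtypeEquivSubtype fun hz => (Subgroup.mem_center_iff.mp hz x).symm
  rw [Nat.card_congr eClass, ← Nat.card_congr eCenter, ← Nat.card_sum,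
    Nat.card_congr (Equiv.sumCompl _)]

variable [CharP F 2]

theorem card_class_add_rootCount (x : V) :
    Nat.card {y // Quotient.mk (commSetoid F) y = Quotient.mk _ x} +
      rootCount (x.1 : Matrix (Fin 2) (Fin 2) F).trace = q := by
  have hclass := card_class_add_card_center x
  have hcenter : Nat.card (center SL(2, F)) = 1 := by
    rw [center_eq_bot_of_charTwo, Subgroup.card_bot]
  rw [hcenter, ← Nat.card_congr (normFormEquivCentralizer x.2)] at hclass
  have := card_normForm_eq_one_add_rootCount (x.1 : Matrix (Fin 2) (Fin 2) F).trace
  omega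

theorem card_commClass_mul (n : ℕ) :
    Nat.card {c : Quotient (commSetoid F) // Nat.card {y // Quotient.mk _ y = c} = n} * n =
      Nat.card {x : V // q - rootCount (x.1 : Matrix (Fin 2) (Fin 2) F).trace = n} := by
  rw [← Nat.card_subtype_comp_eq_mul (Quotient.mk (commSetoid F)) fun _ hc => hc]
  exact Nat.card_congr <| Equiv.subtypeEquivRight fun x => by
    rw [← card_class_add_rootCount x, Nat.add_sub_cancel]

theorem card_noncentral_sub_rootCount_trace {r : ℕ} (hr : r ≤ 2) :
    Nat.card {x : V // q - rootCount (x.1 : Matrix (Fin 2) (Fin 2) F).trace = q - r} =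
      Nat.card {x : V // rootCount (x.1 : Matrix (Fin 2) (Fin 2) F).trace = r} :=
  Nat.card_congr <| Equiv.subtypeEquivRight fun x => by
    have := rootCount_le_two (x.1 : Matrix (Fin 2) (Fin 2) F).trace
    have := Fintype.one_lt_card (α := F)
    omega

theorem card_noncentral_rootCount_trace_eq_one :
    Nat.card {x : V // rootCount (x.1 : Matrix (Fin 2) (Fin 2) F).trace = 1} + 1 = q * q := by
  rw [card_noncentral_add_one (P := fun g : SL(2, F) =>
      rootCount (g : Matrix (Fin 2) (Fin 2) F).trace = 1)
      (by rw [trace_coe_one_of_charTwo, rootCount_zero]),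
    Nat.card_congr (Equiv.subtypeEquivRight fun g => rootCount_eq_one_iff), card_trace_eq,
    rootCount_zero, Nat.sub_add_cancel Fintype.card_pos]

theorem card_noncentral_rootCount_trace {r : ℕ} (hr : r ≠ 1) :
    Nat.card {x : V // rootCount (x.1 : Matrix (Fin 2) (Fin 2) F).trace = r} =
      Nat.card {t : F // rootCount t = r} * (q * (q - 1 + r)) := by
  rw [card_noncentral_eq
    (P := fun g : SL(2, F) => rootCount (g : Matrix (Fin 2) (Fin 2) F).trace = r)
    (by rw [trace_coe_one_of_charTwo, rootCount_zero]; exact hr.symm)]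
  exact Nat.card_subtype_comp_eq_mul (fun g : SL(2, F) => (g : Matrix (Fin 2) (Fin 2) F).trace)
    fun t (ht : rootCount t = r) => by rw [card_trace_eq, ht]

theorem card_commClass_eq {m : ℕ} (hq : q = 2 * m) (hm : 2 ≤ m) (n : ℕ) :
    Nat.card {c : Quotient (commSetoid F) // Nat.card {y // Quotient.mk _ y = c} = n} =
      (if 2 * m - 1 = n then 2 * m + 1 else 0) + (if 2 * m - 2 = n then m * (2 * m + 1) else 0) +
        (if 2 * m = n then m * (2 * m - 1) else 0) := by
  rcases Nat.eq_zero_or_pos n with rfl | hn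
  · rw [if_neg (by omega), if_neg (by omega), if_neg (by omega), Quotient.card_fiber_card_eq_zero]
  refine Nat.eq_of_mul_eq_mul_right hn ?_
  rw [card_commClass_mul]
  obtain ⟨hT, hT'⟩ := card_rootCount_partition (F := F)
  have hT1 := card_rootCount_eq_one (F := F)
  obtain ⟨p, rfl⟩ : ∃ p, m = p + 2 := ⟨m - 2, by omega⟩
  by_cases h1 : n = q - 1
  · have h0 := card_noncentral_rootCount_trace_eq_one (F := F)
    rw [h1, card_noncentral_sub_rootCount_trace (by omega), hq, if_pos rfl, if_neg (by omega),
      if_neg (by omega), show 2 * (p + 2) - 1 = 2 * p + 3 by omega]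
    rw [hq] at h0
    linarith
  by_cases h2 : n = q - 2
  · rw [h2, card_noncentral_sub_rootCount_trace (by omega),
      card_noncentral_rootCount_trace (by omega),
      show Nat.card {t : F // rootCount t = 2} = p + 1 by omega, hq, if_neg (by omega), if_pos rfl,
      if_neg (by omega), show 2 * (p + 2) - 1 + 2 = 2 * p + 5 by omega,
      show 2 * (p + 2) - 2 = 2 * p + 2 by omega]
    ring
  by_cases h3 : n = q - 0
  · rw [h3, card_noncentral_sub_rootCount_trace (by omega),
      card_noncentral_rootCount_trace (by omega),
      show Nat.card {t : F // rootCount t = 0} = p + 2 by omega, hq, if_neg (by omega),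
      if_neg (by omega), if_pos (by omega), Nat.sub_zero, show 2 * (p + 2) - 1 = 2 * p + 3 by omega]
    ring
  rw [if_neg (by omega), if_neg (by omega), if_neg (by omega)]
  have : IsEmpty {x : V // q - rootCount (x.1 : Matrix (Fin 2) (Fin 2) F).trace = n} :=
    ⟨fun ⟨x, hx⟩ => by have := rootCount_le_two (x.1 : Matrix (Fin 2) (Fin 2) F).trace; omega⟩
  simp

end Matrix.SpecialLinearGroup

section CompleteUnion

abbrev cliqueIndex (K₁ m₁ K₂ m₂ K₃ m₃ : ℕ) :
    ((Fin K₁ × Fin m₁) ⊕ (Fin K₂ × Fin m₂)) ⊕ (Fin K₃ × Fin m₃) → (Fin K₁ ⊕ Fin K₂) ⊕ Fin K₃ :=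
  Sum.map (Sum.map Prod.fst Prod.fst) Prod.fst

variable {K₁ K₂ K₃ m₁ m₂ m₃ : ℕ}

def completeUnionSumIso :
    completeUnion K₁ m₁ ⊕g completeUnion K₂ m₂ ⊕g completeUnion K₃ m₃ ≃g
      SimpleGraph.ofSetoid (Setoid.ker (cliqueIndex K₁ m₁ K₂ m₂ K₃ m₃)) :=
  ⟨Equiv.refl _, by
    rintro ((x | x) | x) ((y | y) | y) <;>
      simp [completeUnion, SimpleGraph.ofSetoid, Setoid.ker_def]⟩

theorem card_cliqueIndex_fiber_eq (n : ℕ) :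
    Nat.card {j : (Fin K₁ ⊕ Fin K₂) ⊕ Fin K₃ //
      Nat.card {w // cliqueIndex K₁ m₁ K₂ m₂ K₃ m₃ w = j} = n} =
      (if m₁ = n then K₁ else 0) + (if m₂ = n then K₂ else 0) + (if m₃ = n then K₃ else 0) := by
  have hfiber (j : (Fin K₁ ⊕ Fin K₂) ⊕ Fin K₃) :
      Nat.card {w // cliqueIndex K₁ m₁ K₂ m₂ K₃ m₃ w = j} =
        Sum.elim (Sum.elim (fun _ => m₁) (fun _ => m₂)) (fun _ => m₃) j := by
    rw [Nat.card_eq_fintype_card, Fintype.card_subtype, Finset.card_filter]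
    obtain ((i | i) | i) := j <;> simp only [Fintype.sum_sum_type, Fintype.sum_prod_type] <;> simp
  simp only [hfiber]
  rw [Nat.card_congr Equiv.subtypeSum, Nat.card_sum, Nat.card_congr Equiv.subtypeSum, Nat.card_sum]
  simp only [Sum.elim_inl, Sum.elim_inr]
  split_ifs <;> simp [*]

end CompleteUnion

open scoped MatrixGroups in
theorem commGraph_SL_two_iso {F : Type*} [Field F] [Fintype F] [CharP F 2] {m : ℕ}
    (hq : Fintype.card F = 2 * m) (hm : 2 ≤ m) :
    Nonempty (commGraph SL(2, F) ≃g
      completeUnion (2 * m + 1) (2 * m - 1) ⊕g completeUnion (m * (2 * m + 1)) (2 * m - 2) ⊕g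
        completeUnion (m * (2 * m - 1)) (2 * m)) := by
  obtain ⟨σ, e, he⟩ := exists_equiv_comp_eq_of_card_fiber_eq
    (Quotient.mk (Matrix.SpecialLinearGroup.commSetoid F)) (cliqueIndex _ _ _ _ _ _) fun n => by
      rw [Matrix.SpecialLinearGroup.card_commClass_eq hq hm, card_cliqueIndex_fiber_eq]
  rw [Matrix.SpecialLinearGroup.commGraph_eq_ofSetoid,
    ← Setoid.ker_mk_eq (Matrix.SpecialLinearGroup.commSetoid F)]
  exact ⟨(SimpleGraph.ofSetoidKerCongr e σ.injective he).trans completeUnionSumIso.symm⟩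

theorem commGraph_PSL_two_general
    (k : ℕ) (hk : 2 ≤ k) (F : Type*) [Field F] [Fintype F]
    (hF : Fintype.card F = 2 ^ k) :
    Nonempty (commGraph
        (Matrix.SpecialLinearGroup (Fin 2) F ⧸
          Subgroup.center (Matrix.SpecialLinearGroup (Fin 2) F)) ≃g
      (completeUnion (2 ^ k + 1) (2 ^ k - 1)
        ⊕g completeUnion (2 ^ (k - 1) * (2 ^ k + 1)) (2 ^ k - 2)
        ⊕g completeUnion (2 ^ (k - 1) * (2 ^ k - 1)) (2 ^ k))) := by
  have : CharP F 2 := charP_of_card_eq_prime_pow hF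
  obtain ⟨m, rfl⟩ : ∃ m, k = m + 1 := ⟨k - 1, by omega⟩
  rw [pow_succ'] at hF
  rw [Nat.add_sub_cancel, pow_succ']
  obtain ⟨iso⟩ := commGraph_SL_two_iso hF (le_self_pow₀ (by norm_num) (by omega))
  exact ⟨(commGraphCongr <| (QuotientGroup.quotientMulEquivOfEq
    (Matrix.SpecialLinearGroup.center_eq_bot_of_charTwo (F := F))).trans
      QuotientGroup.quotientBot).trans iso⟩

/-- For `k ≥ 2`, the commuting graph of `PSL(2, 2^k)` is isomorphic to
`(2^k+1)·K_{2^k-1} ⊔ 2^{k-1}(2^k+1)·K_{2^k-2} ⊔ 2^{k-1}(2^k-1)·K_{2^k}`. -/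
theorem commGraph_PSL_two
    (k : ℕ) (hk : 2 ≤ k) (F : Type*) [Field F] [Fintype F] [DecidableEq F]
    (hF : Fintype.card F = 2 ^ k) :
    Nonempty (commGraph
        (Matrix.SpecialLinearGroup (Fin 2) F ⧸
          Subgroup.center (Matrix.SpecialLinearGroup (Fin 2) F)) ≃g
      (completeUnion (2 ^ k + 1) (2 ^ k - 1)
        ⊕g completeUnion (2 ^ (k - 1) * (2 ^ k + 1)) (2 ^ k - 2)
        ⊕g completeUnion (2 ^ (k - 1) * (2 ^ k - 1)) (2 ^ k))) :=
  commGraph_PSL_two_general k hk F hF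
end

section
/- Let F = GF(2^n), n ≥ 2, and θ the Frobenius automorphism x ↦ x^2. Let A(n, θ) be the group of matrices U(a,b) = [[1,0,0],[a,1,0],[b,θ(a),1]] with a, b ∈ F, under matrix multiplication. Then Z(A(n,θ)) = {U(0,b) : b ∈ F}, the centralizer of any non-central U(a,b) equals Z(A(n,θ)) ∪ U(a,0)Z(A(n,θ)), and the commuting graph of A(n,θ) is isomorphic to (2^n - 1)·K_{2^n}. -/
open Polynomial

/-- Hanaki's group `A(n, θ)`: pairs `(a, b)` over `F = GF(2ⁿ)` with multiplication
`U(a,b)·U(a',b') = U(a+a', b+b'+a'·θ(a))`, where `θ(x) = x²` is the Frobenius. -/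
structure HanakiA (F : Type*) where
  a : F
  b : F

namespace HanakiA

variable {F : Type*} [Field F] [CharP F 2]

instance : Mul (HanakiA F) := ⟨fun x y => ⟨x.a + y.a, x.b + y.b + y.a * x.a ^ 2⟩⟩
instance : One (HanakiA F) := ⟨⟨0, 0⟩⟩
instance : Inv (HanakiA F) := ⟨fun x => ⟨x.a, x.b + x.a ^ 3⟩⟩

lemma mul_def (x y : HanakiA F) :
    x * y = ⟨x.a + y.a, x.b + y.b + y.a * x.a ^ 2⟩ := rfl
lemma one_def : (1 : HanakiA F) = ⟨0, 0⟩ := rfl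
lemma inv_def (x : HanakiA F) : x⁻¹ = ⟨x.a, x.b + x.a ^ 3⟩ := rfl

instance : Group (HanakiA F) where
  mul_assoc x y z := by
    simp only [mul_def, mk.injEq]
    refine ⟨by ring, ?_⟩
    rw [CharTwo.add_sq]
    ring
  one_mul x := by
    cases x
    simp [mul_def, one_def]
  mul_one x := by
    cases x
    simp [mul_def, one_def]
  inv_mul_cancel x := by
    simp only [mul_def, inv_def, one_def, mk.injEq, CharTwo.add_self_eq_zero]
    refine ⟨trivial, ?_⟩
    have h2 : (2 : F) = 0 := CharTwo.two_eq_zero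
    linear_combination (x.b + x.a ^ 3) * h2

instance [Finite F] : Finite (HanakiA F) :=
  Finite.of_equiv (F × F)
    ⟨fun p => ⟨p.1, p.2⟩, fun x => (x.a, x.b), fun _ => rfl, fun _ => rfl⟩

end HanakiA

/-!
Two elements commute iff `a' θ(a) = a θ(a')`, i.e. `a a' (a - a') = 0`. So an element with
`a ≠ 0` commutes exactly with the elements whose `a`-coordinate is `0` or equal to its own.
As soon as `F` has a third element this makes the center `{a = 0}`, the centralizer of a
non-central `U(a, b)` the two cosets `{a' = 0} ∪ {a' = a}`, and the commuting graph on the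
non-central elements `(a, b)` with `a ∈ Fˣ` the disjoint union of the cliques `a = const`.
-/

theorem SimpleGraph.nonempty_iso_completeUnion {V α β : Type*} [Fintype α] [Fintype β]
    (G : SimpleGraph V) (e : V ≃ α × β) (hG : ∀ x y, G.Adj x y ↔ x ≠ y ∧ (e x).1 = (e y).1) :
    Nonempty (G ≃g completeUnion (Fintype.card α) (Fintype.card β)) := by
  let e' := e.trans ((Fintype.equivFin α).prodCongr (Fintype.equivFin β))
  refine ⟨⟨e', fun {x y} => ?_⟩⟩
  simp only [completeUnion, hG, ne_eq, e'.injective.eq_iff]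
  simp [e', Equiv.prodCongr_apply]

namespace HanakiA

attribute [ext] HanakiA

variable {F : Type*} [Field F]

@[simp]
theorem mul_a (x y : HanakiA F) : (x * y).a = x.a + y.a := rfl

@[simp]
theorem mul_b (x y : HanakiA F) : (x * y).b = x.b + y.b + y.a * x.a ^ 2 := rfl

theorem commute_iff {x y : HanakiA F} : Commute x y ↔ x.a = 0 ∨ y.a = 0 ∨ x.a = y.a := by
  have h : Commute x y ↔ x.a * y.a * (x.a - y.a) = 0 := by
    simp only [Commute, SemiconjBy, HanakiA.ext_iff, mul_a, mul_b, add_comm x.a y.a, true_and]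
    constructor <;> intro h <;> linear_combination h
  rw [h, mul_eq_zero, mul_eq_zero, sub_eq_zero, or_assoc]

theorem commute_iff_of_a_ne_zero {x y : HanakiA F} (hx : x.a ≠ 0) (hy : y.a ≠ 0) :
    Commute x y ↔ x.a = y.a := by
  simp [commute_iff, hx, hy]

theorem image_mk_mul_setOf_a_eq_zero (c : F) :
    (fun g => mk c 0 * g) '' {x : HanakiA F | x.a = 0} = {x | x.a = c} := by
  ext x
  constructor
  · rintro ⟨g, hg, rfl⟩
    simp_all
  · intro (hx : x.a = c)
    exact ⟨⟨0, x.b⟩, rfl, HanakiA.ext (by simp [hx]) (by simp)⟩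

variable [CharP F 2]

theorem mem_center_iff [Fintype F] (hF : 2 < Fintype.card F) {x : HanakiA F} :
    x ∈ Subgroup.center (HanakiA F) ↔ x.a = 0 := by
  classical
  rw [Subgroup.mem_center_iff]
  refine ⟨fun h => by_contra fun hx => ?_, fun hx g => commute_iff.2 (.inr (.inl hx))⟩
  have hcard : ({0, x.a} : Finset F).card < (Finset.univ : Finset F).card :=
    Finset.card_le_two.trans_lt hF
  obtain ⟨c, -, hc⟩ := Finset.exists_mem_notMem_of_card_lt_card hcard
  have hcomm : c = 0 ∨ x.a = 0 ∨ c = x.a := commute_iff.1 (h (mk c 0))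
  simp_all

theorem coe_center [Fintype F] (hF : 2 < Fintype.card F) :
    (Subgroup.center (HanakiA F) : Set (HanakiA F)) = {x | x.a = 0} :=
  Set.ext fun _ => mem_center_iff hF

theorem coe_centralizer_singleton {z : HanakiA F} (hz : z.a ≠ 0) :
    (Subgroup.centralizer {z} : Set (HanakiA F)) = {x | x.a = 0} ∪ {x | x.a = z.a} := by
  ext x
  rw [SetLike.mem_coe, Subgroup.mem_centralizer_singleton_iff]
  change Commute x z ↔ x.a = 0 ∨ x.a = z.a
  simp [commute_iff, hz]

def noncenterEquivUnitsProd [Fintype F] (hF : 2 < Fintype.card F) :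
    {x : HanakiA F // x ∉ Subgroup.center (HanakiA F)} ≃ Fˣ × F where
  toFun x := (Units.mk0 x.1.a ((mem_center_iff hF).not.1 x.2), x.1.b)
  invFun p := ⟨⟨p.1, p.2⟩, (mem_center_iff hF).not.2 p.1.ne_zero⟩
  left_inv _ := rfl
  right_inv _ := by simp

theorem nonempty_commGraph_iso [Fintype F] (hF : 2 < Fintype.card F) :
    Nonempty (commGraph (HanakiA F) ≃g
      completeUnion (Fintype.card F - 1) (Fintype.card F)) := by
  classical
  rw [← Fintype.card_units]
  refine SimpleGraph.nonempty_iso_completeUnion _ (noncenterEquivUnitsProd hF) fun x y => ?_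
  have hx := (mem_center_iff hF).not.1 x.2
  have hy := (mem_center_iff hF).not.1 y.2
  exact and_congr_right fun _ => (commute_iff_of_a_ne_zero hx hy).trans (Units.mk0_inj hx hy).symm

end HanakiA

/-- For `F = GF(2ⁿ)`, `n ≥ 2`: the center of `A(n,θ)` is `{U(0,b) : b ∈ F}`, the
centralizer of a non-central element `U(a,b)` is `Z ∪ U(a,0)·Z`, and the commuting
graph of `A(n,θ)` is isomorphic to `(2ⁿ-1)·K_{2ⁿ}`. -/
theorem commGraph_HanakiA
    (n : ℕ) (hn : 2 ≤ n) (F : Type*) [Field F] [Fintype F] [CharP F 2]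
    (hF : Fintype.card F = 2 ^ n) :
    ((Subgroup.center (HanakiA F) : Set (HanakiA F)) = {z : HanakiA F | z.a = 0}) ∧
    (∀ z : HanakiA F, z ∉ Subgroup.center (HanakiA F) →
      (Subgroup.centralizer ({z} : Set (HanakiA F)) : Set (HanakiA F)) =
        (Subgroup.center (HanakiA F) : Set (HanakiA F)) ∪
          (fun g => HanakiA.mk z.a 0 * g) '' (Subgroup.center (HanakiA F) : Set (HanakiA F))) ∧
    Nonempty (commGraph (HanakiA F) ≃g completeUnion (2 ^ n - 1) (2 ^ n)) := by
  have hF2 : 2 < Fintype.card F :=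
    hF ▸ lt_of_lt_of_le (by norm_num) (Nat.pow_le_pow_right two_pos hn)
  refine ⟨HanakiA.coe_center hF2, fun z hz => ?_, ?_⟩
  · rw [HanakiA.coe_centralizer_singleton ((HanakiA.mem_center_iff hF2).not.1 hz),
      HanakiA.coe_center hF2, HanakiA.image_mk_mul_setOf_a_eq_zero]
  · rw [← hF]
    exact HanakiA.nonempty_commGraph_iso hF2
end

section
/- Let F = GF(p^n) for a prime p, and let A(n,p) be the group of lower unitriangular 3×3 matrices V(a,b,c) = [[1,0,0],[a,1,0],[b,c,1]] over F. Then the commuting graph of A(n,p) is isomorphic to (p^n + 1)·K_{p^{2n} - p^n}, and hence its spectrum is {(-1) with multiplicity p^{3n} - 2p^n - 1, (p^{2n} - p^n - 1) with multiplicity p^n + 1}. -/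
open Polynomial

/-- The group `A(n, p)` of lower unitriangular `3×3` matrices `V(a,b,c)` over `F`,
with multiplication `V(a,b,c)·V(a',b',c') = V(a+a', b+b'+c·a', c+c')`. -/
structure TriGroup (F : Type*) where
  a : F
  b : F
  c : F

namespace TriGroup

variable {F : Type*} [Field F]

instance : Mul (TriGroup F) :=
  ⟨fun x y => ⟨x.a + y.a, x.b + y.b + x.c * y.a, x.c + y.c⟩⟩
instance : One (TriGroup F) := ⟨⟨0, 0, 0⟩⟩
instance : Inv (TriGroup F) := ⟨fun x => ⟨-x.a, -x.b + x.c * x.a, -x.c⟩⟩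

lemma mul_def (x y : TriGroup F) :
    x * y = ⟨x.a + y.a, x.b + y.b + x.c * y.a, x.c + y.c⟩ := rfl
lemma one_def : (1 : TriGroup F) = ⟨0, 0, 0⟩ := rfl
lemma inv_def (x : TriGroup F) : x⁻¹ = ⟨-x.a, -x.b + x.c * x.a, -x.c⟩ := rfl

instance : Group (TriGroup F) where
  mul_assoc x y z := by
    simp only [mul_def, mk.injEq]
    refine ⟨by ring, by ring, by ring⟩
  one_mul x := by cases x; simp [mul_def, one_def]
  mul_one x := by cases x; simp [mul_def, one_def]
  inv_mul_cancel x := by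
    simp only [mul_def, inv_def, one_def, mk.injEq]
    refine ⟨by ring, by ring, by ring⟩

instance [Finite F] : Finite (TriGroup F) :=
  Finite.of_equiv (F × F × F)
    ⟨fun p => ⟨p.1, p.2.1, p.2.2⟩, fun x => (x.a, x.b, x.c), fun _ => rfl, fun _ => rfl⟩

end TriGroup

/-! Non-central elements `V(a,b,c)` and `V(a',b',c')` commute iff `c a' = c' a`, i.e. iff `(a, c)`
and `(a', c')` give the same point of the projective line over `F`. Hence, with `q = |F|`, the
commuting graph is a disjoint union of `q + 1` cliques, one for each slope, each with `(q - 1) q`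
vertices (a nonzero multiple of the direction and a free entry `b`). -/

@[simp]
theorem completeUnion_adj {k m : ℕ} {x y : Fin k × Fin m} :
    (completeUnion k m).Adj x y ↔ x ≠ y ∧ x.1 = y.1 := Iff.rfl

open Matrix in
theorem charpoly_adjMatrix_completeUnion {R : Type*} [CommRing R] (k m : ℕ) (hm : 0 < m)
    [DecidableRel (completeUnion k m).Adj] :
    ((completeUnion k m).adjMatrix R).charpoly
      = (X + 1) ^ (k * m - k) * (X - C ((m : R) - 1)) ^ k := by
  -- `A + 1 = B * Bᵀ` for the vertex-clique incidence matrix `B`, and `Bᵀ * B = m • 1`.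
  let B : Matrix (Fin k × Fin m) (Fin k) R := of fun x i => if x.1 = i then 1 else 0
  have hA : (completeUnion k m).adjMatrix R = B * Bᵀ - scalar _ 1 := by
    ext x y
    by_cases h : x = y
    · subst h; simp [B, mul_apply]
    · by_cases h1 : x.1 = y.1 <;> simp [B, mul_apply, h, h1]
  have hB : Bᵀ * B = diagonal fun _ => (m : R) := by
    ext i j
    by_cases h : i = j
    · subst h; simp [B, mul_apply, Fintype.sum_prod_type]
    · simp [B, mul_apply, Fintype.sum_prod_type, h, Ne.symm h]
  have hkm : Fintype.card (Fin k) ≤ Fintype.card (Fin k × Fin m) := by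
    simpa using Nat.le_mul_of_pos_right k hm
  rw [hA, charpoly_sub_scalar, charpoly_mul_comm_of_le _ _ hkm, hB, charpoly_diagonal]
  simp only [Finset.prod_const, Finset.card_univ, Fintype.card_fin, Fintype.card_prod, map_sub,
    map_one, mul_comp, pow_comp, X_comp, sub_comp, C_comp]
  ring

theorem nonempty_iso_completeUnion_of_fibers {V K : Type*} [Finite V] [Finite K]
    (G : SimpleGraph V) (f : V → K) {m : ℕ} (hadj : ∀ x y, G.Adj x y ↔ x ≠ y ∧ f x = f y)
    (hfiber : ∀ i, Nat.card {x // f x = i} = m) :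
    Nonempty (G ≃g completeUnion (Nat.card K) m) := by
  let eK := Finite.equivFin K
  let e : V ≃ Fin (Nat.card K) × Fin m :=
    (Equiv.sigmaFiberEquiv f).symm.trans <|
      (Equiv.sigmaCongrRight fun i => Finite.equivFinOfCardEq (hfiber i)).trans <|
        (Equiv.sigmaEquivProd K (Fin m)).trans <| eK.prodCongr (Equiv.refl _)
  have he : ∀ x, (e x).1 = eK (f x) := fun _ => rfl
  exact ⟨⟨e, fun {x y} => by simp [hadj, he, e.injective.ne_iff]⟩⟩

theorem commCharpoly_eq_of_iso {G V : Type*} [Group G] [Finite G] [Fintype V] [DecidableEq V]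
    {H : SimpleGraph V} [DecidableRel H.Adj] (φ : commGraph G ≃g H) :
    commCharpoly G = (H.adjMatrix ℝ).charpoly := by
  classical
  have := Fintype.ofFinite G
  rw [← SimpleGraph.Iso.reindex_adjMatrix ℝ φ, Matrix.charpoly_reindex]
  unfold commCharpoly
  convert rfl

namespace TriGroup

variable {F : Type*} [Field F]

theorem mem_center_iff {x : TriGroup F} :
    x ∈ Subgroup.center (TriGroup F) ↔ x.a = 0 ∧ x.c = 0 := by
  rw [Subgroup.mem_center_iff]
  refine ⟨fun h => ⟨?_, ?_⟩, fun ⟨ha, hc⟩ g => ?_⟩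
  · simpa [mul_def, add_comm] using (h ⟨0, 0, 1⟩).symm
  · simpa [mul_def, add_comm] using h ⟨1, 0, 0⟩
  · simp [mul_def, ha, hc, add_comm]

theorem commute_iff {x y : TriGroup F} : Commute x y ↔ x.c * y.a = y.c * x.a := by
  simp only [Commute, SemiconjBy, mul_def, mk.injEq, add_comm x.a, add_comm x.c, true_and,
    and_true]
  constructor <;> intro h <;> linear_combination h

open Classical in
/-- The slope `c / a` of `V(a, b, c)` as a point of the projective line `F ∪ {∞}`,
with `none` standing for `∞`. -/
noncomputable def slope (x : TriGroup F) : Option F :=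
  if x.a = 0 then none else some (x.c / x.a)

theorem slope_eq_none_iff {x : TriGroup F} : x.slope = none ↔ x.a = 0 := by
  unfold slope; split_ifs with h <;> simp [h]

theorem slope_eq_some_iff {x : TriGroup F} {s : F} :
    x.slope = some s ↔ x.a ≠ 0 ∧ x.c = s * x.a := by
  unfold slope; split_ifs with h
  · simp [h]
  · simp [h, div_eq_iff h]

theorem slope_eq_slope_iff {x y : TriGroup F} (hx : x ∉ Subgroup.center (TriGroup F))
    (hy : y ∉ Subgroup.center (TriGroup F)) : x.slope = y.slope ↔ Commute x y := by
  rw [mem_center_iff] at hx hy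
  rw [commute_iff]
  unfold slope
  split_ifs with hxa hya hya
  · simp [hxa, hya]
  · simpa [hxa, hya] using fun h => hx ⟨hxa, h⟩
  · simpa [hxa, hya, eq_comm] using fun h => hy ⟨hya, h⟩
  · simp [div_eq_div_iff hxa hya]

noncomputable def slopeFiberEquiv (i : Option F) :
    {x : {x : TriGroup F // x ∉ Subgroup.center (TriGroup F)} // x.1.slope = i} ≃ Fˣ × F :=
  (Equiv.subtypeSubtypeEquivSubtypeInter (· ∉ Subgroup.center (TriGroup F)) (slope · = i)).trans <|
    match i with
    | none =>
      calc _ ≃ {x : TriGroup F // x.a = 0 ∧ x.c ≠ 0} :=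
            Equiv.subtypeEquivRight fun x => by rw [mem_center_iff, slope_eq_none_iff]; tauto
        _ ≃ Fˣ × F :=
          { toFun := fun x => (Units.mk0 x.1.c x.2.2, x.1.b)
            invFun := fun u => ⟨⟨0, u.2, u.1⟩, rfl, u.1.ne_zero⟩
            left_inv := by rintro ⟨⟨a, b, c⟩, ha, _⟩; dsimp only at ha; subst ha; rfl
            right_inv := fun ⟨_, _⟩ => by simp }
    | some s =>
      calc _ ≃ {x : TriGroup F // x.a ≠ 0 ∧ x.c = s * x.a} :=
            Equiv.subtypeEquivRight fun x => by rw [mem_center_iff, slope_eq_some_iff]; tauto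
        _ ≃ Fˣ × F :=
          { toFun := fun x => (Units.mk0 x.1.a x.2.1, x.1.b)
            invFun := fun u => ⟨⟨u.1, u.2, s * u.1⟩, u.1.ne_zero, rfl⟩
            left_inv := by rintro ⟨⟨a, b, c⟩, _, hc⟩; dsimp only at hc; subst hc; rfl
            right_inv := fun ⟨_, _⟩ => by simp }

theorem card_slopeFiber (i : Option F) :
    Nat.card {x : {x : TriGroup F // x ∉ Subgroup.center (TriGroup F)} // x.1.slope = i}
      = (Nat.card F - 1) * Nat.card F := by
  rw [Nat.card_congr (slopeFiberEquiv i), Nat.card_prod, Nat.card_units]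

theorem nonempty_commGraph_iso_completeUnion [Finite F] :
    Nonempty (commGraph (TriGroup F) ≃g
      completeUnion (Nat.card F + 1) ((Nat.card F - 1) * Nat.card F)) := by
  rw [← Finite.card_option]
  refine nonempty_iso_completeUnion_of_fibers _ (fun x => x.1.slope) (fun x y => ?_)
    card_slopeFiber
  rw [slope_eq_slope_iff x.2 y.2]
  rfl

end TriGroup

theorem commGraph_TriGroup_general
    (p n : ℕ) (F : Type*) [Field F] [Fintype F]
    (hF : Fintype.card F = p ^ n) :
    Nonempty (commGraph (TriGroup F) ≃g
      completeUnion (p ^ n + 1) (p ^ (2 * n) - p ^ n)) ∧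
    commCharpoly (TriGroup F) =
      (X + 1) ^ (p ^ (3 * n) - 2 * p ^ n - 1)
        * (X - C ((p : ℝ) ^ (2 * n) - (p : ℝ) ^ n - 1)) ^ (p ^ n + 1) := by
  classical
  have hq : 2 ≤ p ^ n := hF ▸ Fintype.one_lt_card
  rw [pow_mul' p 2, pow_mul' p 3, pow_mul' (p : ℝ) 2, ← Nat.cast_pow] at *
  generalize p ^ n = q at *
  obtain ⟨φ⟩ : Nonempty (commGraph (TriGroup F) ≃g completeUnion (q + 1) (q ^ 2 - q)) := by
    have := TriGroup.nonempty_commGraph_iso_completeUnion (F := F)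
    rwa [Nat.card_eq_fintype_card, hF, Nat.sub_one_mul, ← pow_two] at this
  refine ⟨⟨φ⟩, ?_⟩
  obtain ⟨s, hs⟩ : ∃ s, q ^ 2 = s + q :=
    ⟨q ^ 2 - q, (Nat.sub_add_cancel (Nat.le_self_pow two_ne_zero q)).symm⟩
  have hs3 : q ^ 3 = q * s + s + q := by rw [pow_succ, hs, add_mul, ← pow_two, hs]; ring
  have hs0 : 0 < s := by nlinarith
  have hsR : (q : ℝ) ^ 2 = s + q := by exact_mod_cast hs
  rw [commCharpoly_eq_of_iso φ, hs, Nat.add_sub_cancel, charpoly_adjMatrix_completeUnion _ _ hs0,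
    hs3, hsR, add_sub_cancel_right, add_mul, one_mul]
  congr 2
  generalize q * s = t
  omega

/-- For `F = GF(pⁿ)`, the commuting graph of `A(n,p)` is isomorphic to
`(pⁿ+1)·K_{p²ⁿ-pⁿ}`, and hence its spectrum is
`{(-1)^{p³ⁿ-2pⁿ-1}, (p²ⁿ-pⁿ-1)^{pⁿ+1}}`. -/
theorem commGraph_TriGroup
    (p n : ℕ) (hp : p.Prime) (F : Type*) [Field F] [Fintype F]
    (hF : Fintype.card F = p ^ n) :
    Nonempty (commGraph (TriGroup F) ≃g
      completeUnion (p ^ n + 1) (p ^ (2 * n) - p ^ n)) ∧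
    commCharpoly (TriGroup F) =
      (X + 1) ^ (p ^ (3 * n) - 2 * p ^ n - 1)
        * (X - C ((p : ℝ) ^ (2 * n) - (p : ℝ) ^ n - 1)) ^ (p ^ n + 1) :=
  commGraph_TriGroup_general p n F hF
end
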